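/- Let q ∈ ℂ with 0 < |q| < 1, and let w be a nonzero complex number with w ≠ q^n for every integer n (in particular w ≠ 1). Then g_3(w;q) = −1/w + 𝓡(w;q)/(w(1−w)). -/

import Mathlib

/-!
Write `r n = q ^ (n ^ 2) / ∏_{k < n} (1 - w q^(k+1)) (1 - q^(k+1) / w)` for the terms of `𝓡`
and `a n` for those of `g₃`. As `(w;q)_(n+1) (q/w;q)_(n+1)` is `(1 - w) (1 - q^(n+1) / w)` times the
denominator of `r n`, both `a n` and `r (n+1)` are `r n` times a simple factor, and this gives the
telescoping relation `r (n+1) + w qⁿ r n = w (1 - w) a n + w q^(n+1) r (n+1)`. Hence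
`∑_{n ≤ N} r n = (1 - w) + w (1 - w) ∑_{n < N} a n + w q^N r N`. The ratio `r (n+1) / r n` is
`O(q^(2n))`, so both series converge absolutely and the boundary term vanishes, leaving
`𝓡 = (1 - w) + w (1 - w) g₃`.
-/

open Complex

noncomputable section

/-- Finite q-Pochhammer symbol `(a;q)_n`. -/
def qPoch (a q : ℂ) (n : ℕ) : ℂ := ∏ j ∈ Finset.range n, (1 - a * q ^ j)

/-- Infinite q-Pochhammer symbol `(a;q)_∞`. -/
def qPochInf (a q : ℂ) : ℂ := ∏' j : ℕ, (1 - a * q ^ j)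

/-- Jacobi theta function `θ(z;τ)`. -/
def theta (z τ : ℂ) : ℂ :=
  ∑' n : ℤ, (-1 : ℂ) ^ n * Complex.exp (Real.pi * Complex.I * (2 * n + 1) * z) *
    Complex.exp (2 * Real.pi * Complex.I * τ * ((n : ℂ) * (n + 1) / 2 + 1 / 8))

/-- Zwegers' mock Jacobi form `μ(u,v;τ)`. -/
def mu (u v τ : ℂ) : ℂ :=
  Complex.exp (Real.pi * Complex.I * u) / theta v τ *
    ∑' n : ℤ, (-Complex.exp (2 * Real.pi * Complex.I * v)) ^ n *
      Complex.exp (Real.pi * Complex.I * τ * n * (n + 1)) /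
      (1 - Complex.exp (2 * Real.pi * Complex.I * u) *
        Complex.exp (2 * Real.pi * Complex.I * τ) ^ n)

/-- Dedekind eta function `η(τ)`. -/
def eta (τ : ℂ) : ℂ :=
  Complex.exp (Real.pi * Complex.I * τ / 12) *
    ∏' n : ℕ, (1 - Complex.exp (2 * Real.pi * Complex.I * τ * (n + 1)))

/-- Universal mock theta function `g₂(w;q)`. -/
def g2 (w q : ℂ) : ℂ :=
  ∑' n : ℕ, qPoch (-q) q n * q ^ (n * (n + 1) / 2) /
    (qPoch w q (n + 1) * qPoch (q / w) q (n + 1))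

/-- Universal mock theta function `g₃(w;q)`. -/
def g3 (w q : ℂ) : ℂ :=
  ∑' n : ℕ, q ^ (n * (n + 1)) / (qPoch w q (n + 1) * qPoch (q / w) q (n + 1))

/-- Rank generating function `𝓡(w;q)`. -/
def rankGF (w q : ℂ) : ℂ :=
  ∑' n : ℕ, q ^ (n ^ 2) / ∏ k ∈ Finset.range n, ((1 - w * q ^ (k + 1)) * (1 - q ^ (k + 1) / w))

/-- Crank generating function `𝓒(w;q)`. -/
def crankGF (w q : ℂ) : ℂ := qPochInf q q / (qPochInf (w * q) q * qPochInf (q / w) q)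

/-- The series `K'(w;τ)` with `q = e^{2πiτ}`. -/
def Kp (w q : ℂ) : ℂ :=
  ∑' n : ℕ, (-1 : ℂ) ^ n * q ^ (n ^ 2) * qPoch q (q ^ 2) n /
    (qPoch (w * q ^ 2) (q ^ 2) n * qPoch (q ^ 2 / w) (q ^ 2) n)

/-- The series `K''(w;τ)` with `q = e^{2πiτ}` (the sum starts at `n = 1`). -/
def Kpp (w q : ℂ) : ℂ :=
  ∑' n : ℕ, (-1 : ℂ) ^ (n + 1) * q ^ ((n + 1) ^ 2) * qPoch q (q ^ 2) n /
    (qPoch (w * q) (q ^ 2) (n + 1) * qPoch (q / w) (q ^ 2) (n + 1))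

/-- The series `ρ(a,b,c)` from the three variable reciprocity theorem. -/
def rho (a b c q : ℂ) : ℂ :=
  (1 + 1 / b) * ∑' n : ℕ, qPoch c q n * (-1 : ℂ) ^ n * q ^ (n * (n + 1) / 2) * (a / b) ^ n /
    (qPoch (-a * q) q n * qPoch (-c / b) q (n + 1))

open Filter Topology

lemma summable_norm_of_succ_eq_mul_of_tendsto_zero {R : Type*} [SeminormedRing R]
    {f r : ℕ → R} (hf : ∀ n, f (n + 1) = f n * r n) (hr : Tendsto r atTop (𝓝 0)) :
    Summable (‖f ·‖) := by
  refine summable_of_ratio_norm_eventually_le (by norm_num : (1 / 2 : ℝ) < 1) ?_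
  filter_upwards [(tendsto_zero_iff_norm_tendsto_zero.mp hr).eventually_le_const
    (by norm_num : (0 : ℝ) < 1 / 2)] with n hn
  rw [norm_norm, norm_norm, hf, mul_comm (1 / 2 : ℝ)]
  exact (norm_mul_le _ _).trans (mul_le_mul_of_nonneg_left hn (norm_nonneg _))

def rankDenom (w q : ℂ) (n : ℕ) : ℂ :=
  ∏ k ∈ Finset.range n, ((1 - w * q ^ (k + 1)) * (1 - q ^ (k + 1) / w))

def rankTerm (w q : ℂ) (n : ℕ) : ℂ := q ^ (n ^ 2) / rankDenom w q n

def g3Term (w q : ℂ) (n : ℕ) : ℂ :=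
  q ^ (n * (n + 1)) / (qPoch w q (n + 1) * qPoch (q / w) q (n + 1))

lemma rankGF_eq_tsum_rankTerm (w q : ℂ) : rankGF w q = ∑' n, rankTerm w q n := rfl

lemma g3_eq_tsum_g3Term (w q : ℂ) : g3 w q = ∑' n, g3Term w q n := rfl

lemma rankTerm_succ (w q : ℂ) (n : ℕ) :
    rankTerm w q (n + 1) = rankTerm w q n *
      (q ^ n * q ^ (n + 1) / ((1 - w * q ^ (n + 1)) * (1 - q ^ (n + 1) / w))) := by
  rw [rankTerm, rankTerm, rankDenom, Finset.prod_range_succ, ← rankDenom,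
    show (n + 1) ^ 2 = n ^ 2 + n + (n + 1) by ring, pow_add, pow_add, div_mul_div_comm]
  simp only [mul_assoc]

lemma qPoch_mul_qPoch_div (w q : ℂ) (n : ℕ) :
    qPoch w q (n + 1) * qPoch (q / w) q (n + 1)
      = (1 - w) * rankDenom w q n * (1 - q ^ (n + 1) / w) := by
  have hdiv : ∀ k, q / w * q ^ k = q ^ (k + 1) / w := fun k => by ring
  rw [qPoch, qPoch, Finset.prod_range_succ', Finset.prod_range_succ, rankDenom,
    Finset.prod_mul_distrib]
  simp only [hdiv, pow_succ, pow_zero, mul_one]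
  ring

lemma g3Term_eq_rankTerm_mul (w q : ℂ) (n : ℕ) :
    g3Term w q n = rankTerm w q n * (q ^ n / ((1 - w) * (1 - q ^ (n + 1) / w))) := by
  rw [g3Term, rankTerm, qPoch_mul_qPoch_div, div_mul_div_comm, ← pow_add]
  ring_nf

section Telescoping

variable {w q : ℂ}

lemma one_sub_mul_pow_ne_zero_of_ne_zpow (hw : ∀ n : ℤ, w ≠ q ^ n) (k : ℕ) :
    1 - w * q ^ k ≠ 0 := by
  intro h
  apply hw (-k)
  rw [zpow_neg, zpow_natCast]
  exact eq_inv_of_mul_eq_one_left (by linear_combination -h)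

lemma sub_pow_ne_zero_of_ne_zpow (hw : ∀ n : ℤ, w ≠ q ^ n) (k : ℕ) : w - q ^ k ≠ 0 :=
  sub_ne_zero.mpr (by simpa using hw k)

lemma rankTerm_succ_add (hw0 : w ≠ 0) (hw : ∀ n : ℤ, w ≠ q ^ n) (n : ℕ) :
    rankTerm w q (n + 1) + w * q ^ n * rankTerm w q n
      = w * (1 - w) * g3Term w q n + w * q ^ (n + 1) * rankTerm w q (n + 1) := by
  have h1w : 1 - w ≠ 0 := by simpa using one_sub_mul_pow_ne_zero_of_ne_zpow hw 0
  have ha := one_sub_mul_pow_ne_zero_of_ne_zpow hw (n + 1)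
  have hb := sub_pow_ne_zero_of_ne_zpow hw (n + 1)
  rw [rankTerm_succ, g3Term_eq_rankTerm_mul, one_sub_div hw0]
  generalize q ^ (n + 1) = y at ha hb ⊢
  rw [mul_comm w y] at ha ⊢
  field_simp
  ring

lemma sum_range_succ_rankTerm (hw0 : w ≠ 0) (hw : ∀ n : ℤ, w ≠ q ^ n) (N : ℕ) :
    ∑ n ∈ Finset.range (N + 1), rankTerm w q n
      = (1 - w) + w * (1 - w) * ∑ n ∈ Finset.range N, g3Term w q n
        + w * q ^ N * rankTerm w q N := by
  induction N with
  | zero => simp [rankTerm, rankDenom]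
  | succ N ih =>
    rw [Finset.sum_range_succ, ih, Finset.sum_range_succ]
    linear_combination rankTerm_succ_add hw0 hw N

end Telescoping

section Convergence

variable {w q : ℂ} (hq : ‖q‖ < 1)
include hq

lemma summable_norm_rankTerm : Summable (‖rankTerm w q ·‖) := by
  refine summable_norm_of_succ_eq_mul_of_tendsto_zero (rankTerm_succ w q) ?_
  have hpow := tendsto_pow_atTop_nhds_zero_of_norm_lt_one hq
  have hpow' := hpow.comp (tendsto_add_atTop_nat 1)
  simpa [Pi.div_def] using (hpow.mul hpow').div ((tendsto_const_nhds.sub (hpow'.const_mul w)).mul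
    (tendsto_const_nhds.sub (hpow'.div_const w))) (by simp)

lemma summable_g3Term (h1w : 1 - w ≠ 0) : Summable (g3Term w q) := by
  rw [show g3Term w q = _ from funext (g3Term_eq_rankTerm_mul w q)]
  refine (summable_norm_rankTerm hq).mul_tendsto_const (c := 0) ?_
  have hpow := tendsto_pow_atTop_nhds_zero_of_norm_lt_one hq
  have hpow' := hpow.comp (tendsto_add_atTop_nat 1)
  rw [Nat.cofinite_eq_atTop]
  simpa [Pi.div_def] using
    hpow.div (tendsto_const_nhds.mul (tendsto_const_nhds.sub (hpow'.div_const w))) (by simpa)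

lemma rankGF_eq_one_sub_add_mul_g3 (hw0 : w ≠ 0) (hw : ∀ n : ℤ, w ≠ q ^ n) :
    rankGF w q = 1 - w + w * (1 - w) * g3 w q := by
  have h1w : 1 - w ≠ 0 := by simpa using one_sub_mul_pow_ne_zero_of_ne_zpow hw 0
  have hrank := summable_norm_rankTerm (w := w) hq |>.of_norm
  have hpartial : Tendsto (fun N => ∑ n ∈ Finset.range (N + 1), rankTerm w q n) atTop
      (𝓝 (1 - w + w * (1 - w) * g3 w q + w * 0 * 0)) := by
    simp_rw [sum_range_succ_rankTerm hw0 hw, g3_eq_tsum_g3Term]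
    exact (tendsto_const_nhds.add
      ((summable_g3Term hq h1w).hasSum.tendsto_sum_nat.const_mul _)).add
      (((tendsto_pow_atTop_nhds_zero_of_norm_lt_one hq).const_mul w).mul
        hrank.tendsto_atTop_zero)
  rw [rankGF_eq_tsum_rankTerm]
  simpa using tendsto_nhds_unique
    (hrank.hasSum.tendsto_sum_nat.comp (tendsto_add_atTop_nat 1)) hpartial

end Convergence

theorem g3_eq_rankGF_general (q : ℂ) (hq1 : ‖q‖ < 1)
    (w : ℂ) (hw0 : w ≠ 0) (hw : ∀ n : ℤ, w ≠ q ^ n) :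
    g3 w q = -1 / w + rankGF w q / (w * (1 - w)) := by
  have h1w : 1 - w ≠ 0 := by simpa using one_sub_mul_pow_ne_zero_of_ne_zpow hw 0
  rw [rankGF_eq_one_sub_add_mul_g3 hq1 hw0 hw]
  field_simp
  ring

/-- `g₃` in terms of the rank generating function. -/
theorem g3_eq_rankGF (q : ℂ) (hq0 : 0 < ‖q‖) (hq1 : ‖q‖ < 1)
    (w : ℂ) (hw0 : w ≠ 0) (hw : ∀ n : ℤ, w ≠ q ^ n) :
    g3 w q = -1 / w + rankGF w q / (w * (1 - w)) :=
  g3_eq_rankGF_general q hq1 w hw0 hw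

end
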